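/- Let e ≥ 2, let w ∈ {3,4}, and let B be a block of e-weight w forming [w:k_1]-, …, [w:k_t]-pairs via t distinct runners i_1, …, i_t (each k_m ≥ 1). If a partition σ lying in B is exceptional for every one of these pairs, then (k_1+1) + (k_2+1) + ⋯ + (k_t+1) ≤ w. In particular, for w = 3 this forces t = 1 and k_1 ≤ 2, and for w = 4 it forces either t = 1 and k_1 ≤ 3, or t = 2 and k_1 = k_2 = 1. -/

import Mathlib

/-- A partition: a weakly decreasing function `parts : ℕ → ℕ` (0-indexed),
having exactly `len` nonzero parts. -/
structure AbacusPartition where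
  parts : ℕ → ℕ
  antitone : Antitone parts
  len : ℕ
  pos_of_lt : ∀ i, i < len → 0 < parts i
  zero_of_ge : ∀ i, len ≤ i → parts i = 0

/-- The beta-set (abacus display) of a partition with `r` beads:
positions `λ_i + r - i` for `1 ≤ i ≤ r` (0-indexed: `parts i + (r - 1 - i)`). -/
def AbacusPartition.betaSet (lam : AbacusPartition) (r : ℕ) : Finset ℕ :=
  (Finset.range r).image (fun i => lam.parts i + (r - 1 - i))

/-- e-weight of the bead at position `p` of the display `B`: the number of
unoccupied positions `q < p` with `q ≡ p (mod e)`. -/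
def beadWeight (e : ℕ) (B : Finset ℕ) (p : ℕ) : ℕ :=
  ((Finset.range p).filter (fun q => q % e = p % e ∧ q ∉ B)).card

/-- Total e-weight of the display `B`. -/
def abacusWeight (e : ℕ) (B : Finset ℕ) : ℕ :=
  B.sum (fun p => beadWeight e B p)

/-- e-weight of a partition (computed from the display with `lam.len` beads). -/
def eWeight (e : ℕ) (lam : AbacusPartition) : ℕ :=
  abacusWeight e (lam.betaSet lam.len)

/-- Positions on runner `res` (positions `p` with `p % e = res`), in increasing
order, up to a bound strictly beyond every bead. -/
def posList (e : ℕ) (B : Finset ℕ) (res : ℕ) : List ℕ :=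
  (List.range (B.sup id + e + 2)).filter (fun p => p % e == res)

/-- One step of the signature-reduction automaton; the state is
`(list of surviving '+' positions, stack of pending '−' positions)`.
A '−' occurs at `p` when `p` is occupied and its preceding position unoccupied
(position `-1` counts as occupied); a '+' occurs at `p` when `p` is unoccupied
and its preceding position occupied.  A '+' cancels the most recent pending '−'. -/
def signStep (B : Finset ℕ) (st : List ℕ × List ℕ) (p : ℕ) : List ℕ × List ℕ :=
  if p ∈ B ∧ ¬(p = 0 ∨ p - 1 ∈ B) then (st.1, p :: st.2)
  else if p ∉ B ∧ (p = 0 ∨ p - 1 ∈ B) then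
    (match st.2 with
     | [] => (p :: st.1, ([] : List ℕ))
     | _ :: tl => (st.1, tl))
  else st

/-- Final state of the reduction of the `j`-signature on runner `res`:
`(surviving '+' (conormal) positions, surviving '−' (normal) positions)`,
each list in decreasing order of position. -/
def signState (e : ℕ) (B : Finset ℕ) (res : ℕ) : List ℕ × List ℕ :=
  (posList e B res).foldl (signStep B) ([], [])

/-- Positions of the normal beads on runner `res`, in decreasing order. -/
def normalList (e : ℕ) (B : Finset ℕ) (res : ℕ) : List ℕ := (signState e B res).2

/-- The conormal positions on runner `res`, in decreasing order. -/
def conormalList (e : ℕ) (B : Finset ℕ) (res : ℕ) : List ℕ := (signState e B res).1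

/-- ε: the number of normal beads on runner `res`. -/
def epsB (e : ℕ) (B : Finset ℕ) (res : ℕ) : ℕ := (normalList e B res).length

/-- φ: the number of conormal positions on runner `res`. -/
def phiB (e : ℕ) (B : Finset ℕ) (res : ℕ) : ℕ := (conormalList e B res).length

/-- ε_j of a partition: in the display with `lam.len` beads, residue `j`
is carried by runner `(j + lam.len) % e`. -/
def epsP (e : ℕ) (lam : AbacusPartition) (j : ℕ) : ℕ :=
  epsB e (lam.betaSet lam.len) ((j + lam.len) % e)

/-- φ_j of a partition. -/
def phiP (e : ℕ) (lam : AbacusPartition) (j : ℕ) : ℕ :=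
  phiB e (lam.betaSet lam.len) ((j + lam.len) % e)

/-- Move each bead in `ps` from its position `p` to `p - 1`. -/
def moveDown (B : Finset ℕ) (ps : List ℕ) : Finset ℕ :=
  ps.foldl (fun C p => insert (p - 1) (C.erase p)) B

/-- For each position `p` in `ps`, move the bead at `p - 1` to `p`. -/
def moveUp (B : Finset ℕ) (ps : List ℕ) : Finset ℕ :=
  ps.foldl (fun C p => insert p (C.erase (p - 1))) B

/-- Ẽ^t on displays: move the `t` normal beads at the smallest positions down. -/
def Etil (e : ℕ) (B : Finset ℕ) (res t : ℕ) : Finset ℕ :=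
  moveDown B ((normalList e B res).reverse.take t)

/-- F̃^t on displays: for the `t` largest conormal positions `p`,
move the bead at `p - 1` to `p`. -/
def Ftil (e : ℕ) (B : Finset ℕ) (res t : ℕ) : Finset ℕ :=
  moveUp B ((conormalList e B res).take t)

/-- Number of beads of `B` on runner `i`. -/
def runnerCount (e : ℕ) (B : Finset ℕ) (i : ℕ) : ℕ :=
  (B.filter (fun p => p % e = i)).card

/-- Sum of the e-weights of the beads of `B` on runner `i` (this is `|λ(i)|`). -/
def runnerWeight (e : ℕ) (B : Finset ℕ) (i : ℕ) : ℕ :=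
  (B.filter (fun p => p % e = i)).sum (beadWeight e B)

/-- The display of the e-core: slide every bead as far up its runner as possible. -/
def coreBeta (e : ℕ) (B : Finset ℕ) : Finset ℕ :=
  (Finset.range e).biUnion
    (fun i => (Finset.range (runnerCount e B i)).image (fun m => i + m * e))

/-- `lam` lies in the block with bead counts `bd 0, …, bd (e-1)` and e-weight `w`:
displayed with `r = bd 0 + ⋯ + bd (e-1)` beads it has `bd i` beads on runner `i`
and e-weight `w`. -/
def inBlock (e : ℕ) (bd : ℕ → ℕ) (w : ℕ) (lam : AbacusPartition) : Prop :=
  lam.len ≤ (Finset.range e).sum bd ∧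
  (∀ i < e, runnerCount e (lam.betaSet ((Finset.range e).sum bd)) i = bd i) ∧
  abacusWeight e (lam.betaSet ((Finset.range e).sum bd)) = w

/-- The single-runner beta-set of the partition with parts `ρ` and `c` beads. -/
def oneRunnerBeta (rho : List ℕ) (c : ℕ) : Finset ℕ :=
  (Finset.range c).image (fun t => rho.getD t 0 + (c - 1 - t))

/-- The display of the partition `⟨0_{lamOf 0}, …, (e−1)_{lamOf (e−1)} | bd 0, …, bd (e−1)⟩`. -/
def display (e : ℕ) (bd : ℕ → ℕ) (lamOf : ℕ → List ℕ) : Finset ℕ :=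
  (Finset.range e).biUnion
    (fun i => (oneRunnerBeta (lamOf i) (bd i)).image (fun m => i + m * e))

/-- The operator Ḟ at runner `res`: apply F̃^{φ} (valid when ε = 0 < φ). -/
def dotF (e : ℕ) (B : Finset ℕ) (res : ℕ) : Finset ℕ := Ftil e B res (phiB e B res)

/-- Apply a chain of Ḟ steps. -/
def chainFold (e : ℕ) : Finset ℕ → List ℕ → Finset ℕ
  | B, [] => B
  | B, i :: rest => chainFold e (dotF e B i) rest

/-- The chain of Ḟ steps is semisimple: at each step ε = 0 before, φ > 0 before,
and φ = 0 afterwards. -/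
def validChain (e : ℕ) : Finset ℕ → List ℕ → Prop
  | _, [] => True
  | B, i :: rest =>
      (epsB e B i = 0 ∧ 0 < phiB e B i ∧ phiB e (dotF e B i) i = 0) ∧
      validChain e (dotF e B i) rest

/-- `B` induces semisimply to `C` (displays with the same number of beads). -/
def InducesSS (e : ℕ) (B C : Finset ℕ) : Prop :=
  ∃ L : List ℕ, validChain e B L ∧ chainFold e B L = C

/-- Re-display a beta-set with `s` additional beads. -/
def shiftBeta (B : Finset ℕ) (s : ℕ) : Finset ℕ :=
  B.image (· + s) ∪ Finset.range s

/-- `B` induces semisimply to the partition displayed by `C` (where `C` may use a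
different number of beads). -/
def InducesToPartition (e : ℕ) (B C : Finset ℕ) : Prop :=
  ∃ D : Finset ℕ, InducesSS e B D ∧ shiftBeta D C.card = shiftBeta C D.card

/-- The block with bead counts `bd` and weight `w` is Rouquier:
for all `i < j < e`, `bd i − bd j ≥ w` or `bd j − bd i ≥ w − 1`. -/
def IsRouquier (e w : ℕ) (bd : ℕ → ℕ) : Prop :=
  ∀ i j, i < j → j < e → bd j + w ≤ bd i ∨ bd i + (w - 1) ≤ bd j

/-- `lam` is e-singular: it has `e` consecutive equal nonzero parts. -/
def ESingular (e : ℕ) (lam : AbacusPartition) : Prop :=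
  ∃ i, lam.parts i ≠ 0 ∧ ∀ m < e, lam.parts (i + m) = lam.parts i

/-- `lam` is e-regular. -/
def ERegular (e : ℕ) (lam : AbacusPartition) : Prop := ¬ ESingular e lam

/-- The induced e-sequence of the display `B`, as a multiset: each bead of
positive weight `w` at position `p` contributes `p, p−e, …, p−(w−1)e`. -/
def inducedSeq (e : ℕ) (B : Finset ℕ) : Multiset ℕ :=
  B.val.bind (fun p => (Multiset.range (beadWeight e B p)).map (fun m => p - m * e))

/-- The product order: `lam ≤_P mu` iff they have the same e-core and e-weight and
`s(mu)_r ≥ s(lam)_r` componentwise for all sufficiently large `r`. -/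
def ProdLE (e : ℕ) (lam mu : AbacusPartition) : Prop :=
  (∃ r, lam.len ≤ r ∧ mu.len ≤ r ∧
    coreBeta e (lam.betaSet r) = coreBeta e (mu.betaSet r)) ∧
  eWeight e lam = eWeight e mu ∧
  ∃ r0, ∀ r, r0 ≤ r →
    List.Forall₂ (· ≤ ·) ((inducedSeq e (lam.betaSet r)).sort (· ≤ ·))
      ((inducedSeq e (mu.betaSet r)).sort (· ≤ ·))

/-!
Read along a runner, a `−` of the signature adds one to `ε − φ` and a `+` subtracts one, so `ε − φ`
is the number of beads on the runner minus the number of its positions whose predecessor is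
occupied, which is the excess `k` of beads over the preceding runner. An exceptional `σ` has
`ε ≥ k + 1`, hence `φ ≥ 1`. A surviving `+` is an empty position before which the signature has
no excess of `−`, so at least `k + 1` beads of the runner lie above it, each of positive weight.
The weights of distinct runners add up to at most `w`, so `∑ (k_m + 1) ≤ w`; the cases `w = 3, 4`
are arithmetic.
-/

/-- The change of `ε − φ` caused by position `p` of a signature: `1` for a `−`, `-1` for a `+`,
`0` otherwise; since position `-1` counts as occupied this is `[p ∈ B] − [p - 1 ∈ B]`. -/
def signDelta (B : Finset ℕ) (p : ℕ) : ℤ :=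
  (if p ∈ B then 1 else 0) - if p = 0 ∨ p - 1 ∈ B then 1 else 0

section SignAutomaton

variable {B : Finset ℕ}

lemma signDelta_le (p : ℕ) : signDelta B p ≤ if p ∈ B then 1 else 0 := by
  unfold signDelta
  split_ifs <;> simp

lemma signStep_balance (st : List ℕ × List ℕ) (a : ℕ) :
    ((signStep B st a).2.length : ℤ) - (signStep B st a).1.length
      = st.2.length - st.1.length + signDelta B a := by
  obtain ⟨s1, _ | ⟨b, s2⟩⟩ := st <;>
  · unfold signStep signDelta
    split_ifs <;> simp_all <;> omega

lemma length_add_signDelta_le_signStep (st : List ℕ × List ℕ) (a : ℕ) :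
    (st.2.length : ℤ) + signDelta B a ≤ (signStep B st a).2.length := by
  obtain ⟨s1, _ | ⟨b, s2⟩⟩ := st <;>
  · unfold signStep signDelta
    split_ifs <;> simp_all

lemma mem_signStep_fst {st : List ℕ × List ℕ} {a x : ℕ} (hx : x ∈ (signStep B st a).1) :
    x ∈ st.1 ∨ x = a ∧ a ∉ B ∧ (a = 0 ∨ a - 1 ∈ B) ∧ st.2 = [] := by
  obtain ⟨s1, _ | ⟨b, s2⟩⟩ := st <;>
  · unfold signStep at hx
    split_ifs at hx <;> simp_all [or_comm]

lemma foldl_signStep_balance (L : List ℕ) (st : List ℕ × List ℕ) :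
    ((L.foldl (signStep B) st).2.length : ℤ) - (L.foldl (signStep B) st).1.length
      = st.2.length - st.1.length + (L.map (signDelta B)).sum := by
  induction L generalizing st with
  | nil => simp
  | cons a L ih =>
    rw [List.foldl_cons, ih, signStep_balance, List.map_cons, List.sum_cons]
    ring

/-- A `+` survives the reduction only if no `−` is pending when it is read. -/
lemma mem_foldl_signStep_fst {L : List ℕ} (hL : L.Pairwise (· < ·)) {st : List ℕ × List ℕ}
    {x : ℕ} (hx : x ∈ (L.foldl (signStep B) st).1) (hxst : x ∉ st.1) :
    x ∈ L ∧ x ∉ B ∧ (x = 0 ∨ x - 1 ∈ B) ∧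
      (st.2.length : ℤ) + ((L.filter (· < x)).map (signDelta B)).sum ≤ 0 := by
  induction L generalizing st with
  | nil => exact absurd hx hxst
  | cons a L ih =>
    rw [List.pairwise_cons] at hL
    rw [List.foldl_cons] at hx
    by_cases hxa : x ∈ (signStep B st a).1
    · rcases mem_signStep_fst hxa with h | ⟨rfl, hxB, hpred, hst⟩
      · exact absurd h hxst
      · have hfilter : (x :: L).filter (· < x) = [] :=
          List.filter_eq_nil_iff.mpr fun p hp => by
            rcases List.mem_cons.mp hp with rfl | hp
            · simp
            · simpa using (hL.1 p hp).le
        simp [hxB, hpred, hst, hfilter]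
    · obtain ⟨hxL, hxB, hpred, hsum⟩ := ih hL.2 hx hxa
      have hax : a < x := hL.1 x hxL
      refine ⟨List.mem_cons_of_mem a hxL, hxB, hpred, ?_⟩
      have := length_add_signDelta_le_signStep (B := B) st a
      simp only [List.filter_cons, decide_eq_true hax, if_true, List.map_cons, List.sum_cons]
      linarith

end SignAutomaton

lemma succ_mod_eq_iff_of_pos {e res y : ℕ} (h0 : 0 < res) (hres : res < e) :
    (y + 1) % e = res ↔ y % e = res - 1 := by
  have hlt := Nat.mod_lt y (by omega : 0 < e)
  rw [Nat.add_mod_eq_ite, Nat.mod_eq_of_lt (by omega : 1 < e)]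
  split <;> omega

lemma succ_mod_eq_zero_iff {e y : ℕ} (he : 0 < e) : (y + 1) % e = 0 ↔ y % e = e - 1 := by
  have hlt := Nat.mod_lt y he
  rw [Nat.add_mod_eq_ite]
  obtain h1 | rfl : 1 < e ∨ e = 1 := by omega
  · rw [Nat.mod_eq_of_lt h1]
    split <;> omega
  · simp [Nat.mod_one]

section Runner

variable {e : ℕ} {B : Finset ℕ} {res : ℕ}

lemma pairwise_posList : (posList e B res).Pairwise (· < ·) :=
  List.pairwise_lt_range.filter _

lemma mem_posList {p : ℕ} : p ∈ posList e B res ↔ p < B.sup id + e + 2 ∧ p % e = res := by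
  simp [posList]

lemma succ_lt_of_mem {p : ℕ} (hp : p ∈ B) : p + 1 < B.sup id + e + 2 := by
  have : p ≤ B.sup id := Finset.le_sup (f := id) hp
  omega

lemma sum_map_filter_posList (P : ℕ → Bool) (f : ℕ → ℤ) :
    (((posList e B res).filter P).map f).sum = ∑ p ∈ (posList e B res).toFinset with P p, f p := by
  rw [← List.toFinset_filter, List.sum_toFinset f (pairwise_posList.nodup.filter P)]

lemma epsB_sub_phiB_eq_sum :
    (epsB e B res : ℤ) - phiB e B res = ∑ p ∈ (posList e B res).toFinset, signDelta B p := by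
  have := foldl_signStep_balance (B := B) (posList e B res) ([], [])
  simp only [List.length_nil, Nat.cast_zero, sub_self, zero_add] at this
  rw [epsB, phiB, normalList, conormalList, signState, this,
    List.sum_toFinset _ pairwise_posList.nodup]

lemma filter_mem_posList_toFinset :
    {p ∈ (posList e B res).toFinset | p ∈ B} = B.filter (· % e = res) := by
  ext p
  simp only [Finset.mem_filter, List.mem_toFinset, mem_posList]
  constructor
  · rintro ⟨⟨-, hres⟩, hp⟩
    exact ⟨hp, hres⟩
  · rintro ⟨hp, hres⟩
    exact ⟨⟨by have := succ_lt_of_mem (e := e) hp; omega, hres⟩, hp⟩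

lemma filter_pred_mem_posList_toFinset {prev : ℕ}
    (hprev : ∀ y, (y + 1) % e = res ↔ y % e = prev) :
    {p ∈ (posList e B res).toFinset | p = 0 ∨ p - 1 ∈ B}
      = ({0} : Finset ℕ).filter (· % e = res) ∪ (B.filter (· % e = prev)).image (· + 1) := by
  ext p
  simp only [Finset.mem_filter, List.mem_toFinset, mem_posList, Finset.mem_union,
    Finset.mem_singleton, Finset.mem_image]
  constructor
  · rintro ⟨⟨-, hres⟩, hpred⟩
    rcases p with _ | p
    · exact Or.inl ⟨rfl, hres⟩
    · exact Or.inr ⟨p, ⟨by simpa using hpred, (hprev p).mp hres⟩, rfl⟩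
  · rintro (⟨rfl, hres⟩ | ⟨y, ⟨hy, hyprev⟩, rfl⟩)
    · exact ⟨⟨by omega, hres⟩, Or.inl rfl⟩
    · exact ⟨⟨succ_lt_of_mem hy, (hprev y).mpr hyprev⟩, Or.inr (by simpa using hy)⟩

lemma epsB_sub_phiB {prev : ℕ} (hprev : ∀ y, (y + 1) % e = res ↔ y % e = prev) :
    (epsB e B res : ℤ) - phiB e B res
      = runnerCount e B res - runnerCount e B prev - if res = 0 then 1 else 0 := by
  rw [epsB_sub_phiB_eq_sum]
  simp only [signDelta, Finset.sum_sub_distrib, Finset.sum_boole, filter_mem_posList_toFinset,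
    filter_pred_mem_posList_toFinset hprev]
  rw [Finset.card_union_of_disjoint, Finset.card_image_of_injective _ (add_left_injective 1)]
  · have hzero : (({0} : Finset ℕ).filter (· % e = res)).card = if res = 0 then 1 else 0 := by
      rw [Finset.filter_singleton, Nat.zero_mod]
      by_cases h : res = 0 <;> simp [h, eq_comm]
    rw [hzero, runnerCount, runnerCount]
    push_cast
    ring
  · simp [Finset.disjoint_left]

lemma epsB_sub_phiB_of_pos (h0 : 0 < res) (hres : res < e) :
    (epsB e B res : ℤ) - phiB e B res = runnerCount e B res - runnerCount e B (res - 1) := by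
  rw [epsB_sub_phiB fun y => succ_mod_eq_iff_of_pos h0 hres, if_neg h0.ne', sub_zero]

lemma epsB_sub_phiB_zero (he : 0 < e) :
    (epsB e B 0 : ℤ) - phiB e B 0 = runnerCount e B 0 - runnerCount e B (e - 1) - 1 := by
  rw [epsB_sub_phiB fun y => succ_mod_eq_zero_iff he, if_pos rfl]

/-- Every bead on the runner above an empty position `x` of it has positive weight. -/
lemma card_filter_gt_le_runnerWeight {x : ℕ} (hxB : x ∉ B) (hx : x % e = res) :
    (B.filter (fun p => p % e = res ∧ x < p)).card ≤ runnerWeight e B res := by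
  calc (B.filter (fun p => p % e = res ∧ x < p)).card
      = ∑ p ∈ B.filter (fun p => p % e = res ∧ x < p), 1 := by simp
    _ ≤ ∑ p ∈ B.filter (fun p => p % e = res ∧ x < p), beadWeight e B p := by
      refine Finset.sum_le_sum fun p hp => Finset.card_pos.mpr ⟨x, ?_⟩
      simp only [Finset.mem_filter] at hp
      simp [hp.2.2, hx, hp.2.1, hxB]
    _ ≤ runnerWeight e B res :=
      Finset.sum_le_sum_of_subset fun p hp => by
        simp only [Finset.mem_filter] at hp ⊢
        exact ⟨hp.1, hp.2.1⟩

/-- Split the signature at a surviving `+`: below it the balance is at most `0`, the `+` itself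
contributes `-1`, and above it only beads can contribute. -/
lemma epsB_sub_phiB_lt_runnerWeight (hphi : 0 < phiB e B res) :
    (epsB e B res : ℤ) - phiB e B res < runnerWeight e B res := by
  obtain ⟨x, hx⟩ := List.exists_mem_of_length_pos hphi
  obtain ⟨hxL, hxB, hpred, hbelow⟩ :=
    mem_foldl_signStep_fst (B := B) pairwise_posList hx List.not_mem_nil
  simp only [List.length_nil, Nat.cast_zero, zero_add, sum_map_filter_posList,
    decide_eq_true_eq] at hbelow
  set T := (posList e B res).toFinset
  have hxT : x ∈ T.filter (fun p => ¬ p < x) := by simp [T, hxL]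
  have habove : ∑ p ∈ (T.filter (fun p => ¬ p < x)).erase x, signDelta B p
      ≤ runnerWeight e B res := by
    calc ∑ p ∈ (T.filter (fun p => ¬ p < x)).erase x, signDelta B p
        ≤ ∑ p ∈ (T.filter (fun p => ¬ p < x)).erase x, if p ∈ B then 1 else 0 :=
          Finset.sum_le_sum fun p _ => signDelta_le p
      _ ≤ (B.filter (fun p => p % e = res ∧ x < p)).card := by
        rw [Finset.sum_boole]
        refine Nat.cast_le.mpr (Finset.card_le_card fun p hp => ?_)
        simp only [Finset.mem_filter, Finset.mem_erase, T, List.mem_toFinset, mem_posList] at hp ⊢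
        exact ⟨hp.2, hp.1.2.1.2, by omega⟩
      _ ≤ runnerWeight e B res :=
        Nat.cast_le.mpr (card_filter_gt_le_runnerWeight hxB (mem_posList.mp hxL).2)
  have hxdelta : signDelta B x = -1 := by simp [signDelta, hxB, hpred]
  rw [epsB_sub_phiB_eq_sum, ← Finset.sum_filter_add_sum_filter_not T (· < x),
    ← Finset.add_sum_erase _ _ hxT]
  linarith

lemma sum_runnerWeight_le_abacusWeight {ι : Type*} [Fintype ι] {f : ι → ℕ}
    (hf : Function.Injective f) : ∑ m, runnerWeight e B (f m) ≤ abacusWeight e B := by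
  rw [← Finset.sum_image fun _ _ _ _ h => hf h]
  unfold runnerWeight abacusWeight
  rw [Finset.sum_fiberwise_eq_sum_filter]
  exact Finset.sum_le_sum_of_subset (Finset.filter_subset _ _)

end Runner

lemma le_sum_add_one {t : ℕ} {k : Fin t → ℕ} (hk : ∀ m, 1 ≤ k m) (m : Fin t) :
    k m + 1 + 2 * (t - 1) ≤ ∑ i, (k i + 1) := by
  have hrest := Finset.card_nsmul_le_sum (Finset.univ.erase m) (fun i => k i + 1) 2
    fun i _ => by have := hk i; omega
  rw [Finset.card_erase_of_mem (Finset.mem_univ m), Finset.card_univ, Fintype.card_fin,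
    smul_eq_mul] at hrest
  rw [← Finset.add_sum_erase _ _ (Finset.mem_univ m)]
  omega

lemma sum_add_one_le_three {t : ℕ} (ht : 1 ≤ t) {k : Fin t → ℕ} (hk : ∀ m, 1 ≤ k m)
    (hsum : ∑ m, (k m + 1) ≤ 3) : t = 1 ∧ ∀ m, k m ≤ 2 := by
  have := le_sum_add_one hk ⟨0, ht⟩
  have := hk ⟨0, ht⟩
  exact ⟨by omega, fun m => by have := le_sum_add_one hk m; omega⟩

lemma sum_add_one_le_four {t : ℕ} (ht : 1 ≤ t) {k : Fin t → ℕ} (hk : ∀ m, 1 ≤ k m)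
    (hsum : ∑ m, (k m + 1) ≤ 4) :
    (t = 1 ∧ ∀ m, k m ≤ 3) ∨ (t = 2 ∧ ∀ m, k m = 1) := by
  have := le_sum_add_one hk ⟨0, ht⟩
  have := hk ⟨0, ht⟩
  obtain rfl | rfl : t = 1 ∨ t = 2 := by omega
  · exact Or.inl ⟨rfl, fun m => by have := le_sum_add_one hk m; omega⟩
  · exact Or.inr ⟨rfl, fun m => by have := le_sum_add_one hk m; have := hk m; omega⟩

theorem stmt6_general (e : ℕ) (w : ℕ)
    (bd : ℕ → ℕ) (t : ℕ) (ht : 1 ≤ t)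
    (runner : Fin t → ℕ) (hinj : Function.Injective runner)
    (hre : ∀ m, runner m < e) (k : Fin t → ℕ) (hk : ∀ m, 1 ≤ k m)
    (hpair : ∀ m, (0 < runner m → bd (runner m) = bd (runner m - 1) + k m) ∧
      (runner m = 0 → bd 0 = bd (e - 1) + k m + 1))
    (r : ℕ) (hr : r = (Finset.range e).sum bd)
    (sig : AbacusPartition) (hσ : inBlock e bd w sig)
    (hexc : ∀ m, k m + 1 ≤ epsB e (sig.betaSet r) (runner m)) :
    (∑ m, (k m + 1)) ≤ w ∧
    (w = 3 → t = 1 ∧ ∀ m, k m ≤ 2) ∧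
    (w = 4 → (t = 1 ∧ ∀ m, k m ≤ 3) ∨ (t = 2 ∧ ∀ m, k m = 1)) := by
  obtain ⟨-, hcount, hweight⟩ := hσ
  rw [← hr] at hcount hweight
  set B := sig.betaSet r
  have hdiff : ∀ m, (epsB e B (runner m) : ℤ) - phiB e B (runner m) = k m := fun m => by
    have hm := hre m
    rcases Nat.eq_zero_or_pos (runner m) with h0 | h0
    · rw [h0, epsB_sub_phiB_zero (by omega), hcount 0 (by omega), hcount (e - 1) (by omega),
        (hpair m).2 h0]
      push_cast; ring
    · rw [epsB_sub_phiB_of_pos h0 hm, hcount _ hm, hcount _ (by omega), (hpair m).1 h0]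
      push_cast; ring
  have hrunner : ∀ m, k m + 1 ≤ runnerWeight e B (runner m) := fun m => by
    have hexcm := hexc m
    have hdiffm := hdiff m
    have hlt := epsB_sub_phiB_lt_runnerWeight (B := B) (by omega : 0 < phiB e B (runner m))
    omega
  have hsum : ∑ m, (k m + 1) ≤ w :=
    (Finset.sum_le_sum fun m _ => hrunner m).trans
      (hweight ▸ sum_runnerWeight_le_abacusWeight hinj)
  exact ⟨hsum, fun hw => sum_add_one_le_three ht hk (hw ▸ hsum),
    fun hw => sum_add_one_le_four ht hk (hw ▸ hsum)⟩

/-- if a block of weight `w ∈ {3,4}` forms `[w:k_m]`-pairs via `t`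
distinct runners, and `σ` in the block is exceptional for all of them, then
`∑ (k_m + 1) ≤ w`; in particular for `w = 3` necessarily `t = 1` and `k_1 ≤ 2`,
and for `w = 4` either `t = 1` and `k_1 ≤ 3` or `t = 2` and `k_1 = k_2 = 1`. -/
theorem stmt6 (e : ℕ) (he : 2 ≤ e) (w : ℕ) (hw34 : w = 3 ∨ w = 4)
    (bd : ℕ → ℕ) (t : ℕ) (ht : 1 ≤ t)
    (runner : Fin t → ℕ) (hinj : Function.Injective runner)
    (hre : ∀ m, runner m < e) (k : Fin t → ℕ) (hk : ∀ m, 1 ≤ k m)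
    (hpair : ∀ m, (0 < runner m → bd (runner m) = bd (runner m - 1) + k m) ∧
      (runner m = 0 → bd 0 = bd (e - 1) + k m + 1))
    (r : ℕ) (hr : r = (Finset.range e).sum bd)
    (sig : AbacusPartition) (hσ : inBlock e bd w sig)
    (hexc : ∀ m, k m + 1 ≤ epsB e (sig.betaSet r) (runner m)) :
    (∑ m, (k m + 1)) ≤ w ∧
    (w = 3 → t = 1 ∧ ∀ m, k m ≤ 2) ∧
    (w = 4 → (t = 1 ∧ ∀ m, k m ≤ 3) ∨ (t = 2 ∧ ∀ m, k m = 1)) :=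
  stmt6_general e w bd t ht runner hinj hre k hk hpair r hr sig hσ hexc
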